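/- arXiv:2404.05370 — 3 statements merged into one kernel-verified Lean document; each statement's English description precedes it below -/
import Mathlib

section
/- Let (V_N) be a universal system and let N ≥ 2. Let V be a subobject of V_N that is not contained in V_{N−1}, set V' := V ∩ V_{N−1}, and assume that the quotient V/V' is isomorphic to 𝟙. Then the short exact sequence 0 → V' → V → 𝟙 → 0 does not split. -/
/-!
Formalization of results from the appendix "Universal objects of unipotent Tannakian
categories" of K. Sakugawa, "On the infinite Frobenius action on de Rham fundamental
groups of affine curves".

Setting: `K` is a field of characteristic zero, `C` is a `K`-linear abelian category
with a fixed object `e` (the unit object `𝟙` of the unipotent neutral Tannakian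
category; only the `K`-linear abelian structure is used), whose endomorphism ring is
`K` (expressed by the hypothesis that `c ↦ c • 𝟙 e` is a bijection `K → End e`).
-/

open CategoryTheory CategoryTheory.Limits CategoryTheory.Abelian

attribute [local instance] CategoryTheory.Abelian.hasFiniteBiproducts

universe w v u

section Preliminaries

variable {C : Type u} [Category.{v} C] [Abelian C]

/-- `UnipLE e n V` : the object `V` admits a chain of subobjects
`0 = V₀ ⊆ V₁ ⊆ ⋯ ⊆ Vₙ = V` of length `≤ n` whose graded pieces are isomorphic to
finite direct sums of copies of the object `e`, i.e. `V` is unipotent of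
unipotency `≤ n` (with respect to the unit object `e`). -/
inductive UnipLE (e : C) : ℕ → C → Prop
  | zero (V : C) (h : IsZero V) : UnipLE e 0 V
  | step {n : ℕ} {V : C} (W : C) (i : W ⟶ V) (hi : Mono i) (r : ℕ)
      (hW : UnipLE e n W) (h : Nonempty (cokernel i ≅ ⨁ fun _ : Fin r => e)) :
      UnipLE e (n + 1) V

/-- The unipotency of an object: the minimal length of a unipotent filtration. -/
noncomputable def unipotency (e : C) (V : C) : ℕ := sInf {n | UnipLE e n V}

variable (K : Type*) [Field K] [CharZero K] [Linear K C]

section Ext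

variable [HasExt.{w} C]

/-- For a `K`-linear abelian category `C`, the Ext-groups are `K`-vector spaces,
with scalar multiplication given by composition with `c • 𝟙`. -/
noncomputable instance extModule (X Y : C) (n : ℕ) : Module K (Abelian.Ext X Y n) where
  smul c α := (Abelian.Ext.mk₀ (c • 𝟙 X)).comp α (zero_add n)
  one_smul α := by
    show (Abelian.Ext.mk₀ ((1 : K) • 𝟙 X)).comp α (zero_add n) = α
    rw [one_smul, Abelian.Ext.mk₀_id_comp]
  mul_smul c c' α := by
    show (Abelian.Ext.mk₀ ((c * c') • 𝟙 X)).comp α (zero_add n) =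
      (Abelian.Ext.mk₀ (c • 𝟙 X)).comp
        ((Abelian.Ext.mk₀ (c' • 𝟙 X)).comp α (zero_add n)) (zero_add n)
    rw [Abelian.Ext.mk₀_comp_mk₀_assoc,
      show (c • 𝟙 X) ≫ (c' • 𝟙 X) = (c * c') • 𝟙 X by
        rw [CategoryTheory.Linear.smul_comp, Category.id_comp, smul_smul]]
  smul_zero c := by
    show (Abelian.Ext.mk₀ (c • 𝟙 X)).comp (0 : Abelian.Ext X Y n) (zero_add n) = 0
    apply Abelian.Ext.comp_zero
  smul_add c α β := by
    show (Abelian.Ext.mk₀ (c • 𝟙 X)).comp (α + β) (zero_add n) = _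
    rw [Abelian.Ext.comp_add]
    rfl
  add_smul c c' α := by
    show (Abelian.Ext.mk₀ ((c + c') • 𝟙 X)).comp α (zero_add n) = _
    rw [add_smul,
      show (Abelian.Ext.mk₀ (c • 𝟙 X + c' • 𝟙 X) : Abelian.Ext X X 0)
          = Abelian.Ext.mk₀ (c • 𝟙 X) + Abelian.Ext.mk₀ (c' • 𝟙 X) by
        letI := HasDerivedCategory.standard C
        ext
        rw [Abelian.Ext.add_hom, Abelian.Ext.mk₀_hom, Abelian.Ext.mk₀_hom,
          Abelian.Ext.mk₀_hom, Functor.map_add]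
        simp [ShiftedHom.mk₀, Preadditive.add_comp],
      Abelian.Ext.add_comp]
    rfl
  zero_smul α := by
    show (Abelian.Ext.mk₀ ((0 : K) • 𝟙 X)).comp α (zero_add n) = 0
    rw [zero_smul, Abelian.Ext.mk₀_zero, Abelian.Ext.zero_comp]

/-- A *universal system* for the unit object `e`: an inductive system
`V 1 → V 2 → ⋯` in `C` with `V 1 = e` together with, for every `N ≥ 1`, a short exact
sequence `0 → V N → V (N+1) → Ext¹(e, V N) ⊗ e → 0` whose connecting homomorphism
`Ext¹(e, V N) = Hom(e, Ext¹(e, V N) ⊗ e) → Ext¹(e, V N)` (obtained by applying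
`Hom(e, -)` to the sequence) is the identity map, the `K`-vector spaces
`Ext¹(e, V N)` being finite-dimensional.

Here the object `T N` plays the role of `Ext¹(e, V N) ⊗ e`: it is equipped with a
`K`-linear map `coev N : Ext¹(e, V N) →ₗ[K] (e ⟶ T N)` inducing the natural
isomorphism `Hom(T N, W) ≅ Hom_K(Ext¹(e, V N), Hom(e, W))` for every `W` (the field
`tensor_unit`), so that `Hom(e, T N) ≅ Ext¹(e, V N)`.  The identification of the
connecting homomorphism with the identity is the field `connecting`: the pullback of
the `N`-th short exact sequence along the morphism `coev N x : e ⟶ T N` represents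
the extension class `x ∈ Ext¹(e, V N)`, i.e. `(mk₀ (coev N x)) ∘ extClass = x`.

(Indexing: the layer `V N` here is the paper's `V_N`, `N ≥ 1`; the paper's short exact
sequence `0 → V_{N-1} → V_N → Ext¹(𝟙, V_{N-1}) ⊗ 𝟙 → 0` for `N ≥ 2` is the sequence
indexed below by `N - 1 ≥ 1`.) -/
structure UniversalSystem (e : C) where
  V : ℕ → C
  V_one : V 1 = e
  fd : ∀ N, 1 ≤ N → FiniteDimensional K (Abelian.Ext e (V N) 1)
  T : ℕ → C
  coev : ∀ N, Abelian.Ext e (V N) 1 →ₗ[K] (e ⟶ T N)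
  tensor_unit : ∀ N, 1 ≤ N → ∀ W : C,
    Function.Bijective fun g : T N ⟶ W =>
      (CategoryTheory.Linear.rightComp K e g).comp (coev N)
  ι : ∀ N, V N ⟶ V (N + 1)
  π : ∀ N, V (N + 1) ⟶ T N
  zero : ∀ N, ι N ≫ π N = 0
  shortExact : ∀ N, 1 ≤ N → (ShortComplex.mk (ι N) (π N) (zero N)).ShortExact
  connecting : ∀ N (hN : 1 ≤ N) (x : Abelian.Ext e (V N) 1),
    (Abelian.Ext.mk₀ (coev N x)).comp (shortExact N hN).extClass (zero_add 1) = x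

end Ext

end Preliminaries

/-! Since `Hom(e, e) = K`, every morphism `e ⟶ Ext¹(e, V_{N-1}) ⊗ e` comes from an extension
class, which by universality is the connecting image of that morphism. A morphism `e ⟶ V_N`
therefore has zero image in `Ext¹(e, V_{N-1}) ⊗ e`. A section of `V ⟶ V/V' ≅ e` would turn the
map `V ⟶ V_N ⟶ Ext¹(e, V_{N-1}) ⊗ e`, which factors through `V/V'`, into such a morphism, so
that map vanishes and `V` lies in `V_{N-1}`. -/

section TensorUnit

variable {K : Type*} [Field K] {C : Type u} [Category.{v} C] [Abelian C] [Linear K C]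
  {e T : C} {E : Type*} [AddCommGroup E] [Module K E]

theorem exists_sum_comp_coev_eq_id {ι : Type*} [Fintype ι] (b : Module.Basis ι K E)
    (coev : E →ₗ[K] (e ⟶ T))
    (hcoev : ∀ W : C, Function.Bijective fun g : T ⟶ W => (Linear.rightComp K e g).comp coev) :
    ∃ p : ι → (T ⟶ e), ∑ i, p i ≫ coev (b i) = 𝟙 T := by
  choose p hp using fun i => (hcoev e).surjective
    ((LinearMap.toSpanSingleton K (e ⟶ e) (𝟙 e)).comp (b.coord i))
  have hp' : ∀ i y, coev y ≫ p i = b.repr y i • 𝟙 e := fun i y => by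
    simpa [LinearMap.toSpanSingleton, Module.Basis.coord_apply] using
      LinearMap.congr_fun (hp i) y
  refine ⟨p, (hcoev T).injective (LinearMap.ext fun y => ?_)⟩
  simp only [LinearMap.coe_comp, Function.comp_apply, Linear.rightComp_apply,
    Preadditive.comp_sum, Category.comp_id]
  simp_rw [← Category.assoc, hp', Linear.smul_comp, Category.id_comp, ← map_smul, ← map_sum,
    b.sum_repr]

theorem coev_surjective_of_bijective_rightComp [FiniteDimensional K E]
    (hEnd : Function.Bijective fun c : K => c • 𝟙 e) (coev : E →ₗ[K] (e ⟶ T))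
    (hcoev : ∀ W : C, Function.Bijective fun g : T ⟶ W => (Linear.rightComp K e g).comp coev) :
    Function.Surjective coev := by
  intro f
  let b := Module.finBasis K E
  obtain ⟨p, hsum⟩ := exists_sum_comp_coev_eq_id b coev hcoev
  choose c hc using fun i => hEnd.surjective (f ≫ p i)
  refine ⟨∑ i, c i • b i, ?_⟩
  calc coev (∑ i, c i • b i) = ∑ i, (f ≫ p i) ≫ coev (b i) := by
        simp only [map_sum, map_smul, ← hc, Linear.smul_comp, Category.id_comp]
    _ = f := by simp only [Category.assoc, ← Preadditive.comp_sum, hsum, Category.comp_id]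

end TensorUnit

namespace UniversalSystem

theorem comp_π_eq_zero {K : Type*} [Field K] [CharZero K] {C : Type u} [Category.{v} C]
    [Abelian C] [Linear K C] [HasExt.{w} C] {e : C}
    (hEnd : Function.Bijective fun c : K => c • 𝟙 e)
    (S : UniversalSystem K e) {n : ℕ} (hn : 1 ≤ n) (g : e ⟶ S.V (n + 1)) :
    g ≫ S.π n = 0 := by
  have := S.fd n hn
  obtain ⟨x, hx⟩ :=
    coev_surjective_of_bijective_rightComp hEnd (S.coev n) (S.tensor_unit n hn) (g ≫ S.π n)
  have hx0 : x = 0 := by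
    rw [← S.connecting n hn x, hx, ← Abelian.Ext.mk₀_comp_mk₀,
      Abelian.Ext.comp_assoc_of_second_deg_zero, (S.shortExact n hn).comp_extClass,
      Abelian.Ext.comp_zero]
  rw [← hx, hx0, map_zero]

end UniversalSystem

theorem statement1_general
    {K : Type*} [Field K] [CharZero K]
    {C : Type u} [Category.{v} C] [Abelian C] [CategoryTheory.Linear K C] [HasExt.{w} C]
    (e : C)
    (hEnd : Function.Bijective fun c : K => c • 𝟙 e)
    (S : UniversalSystem K e)
    (n : ℕ) (hn : 1 ≤ n)
    (V : C) (m : V ⟶ S.V (n + 1))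
    (hnot : ¬ ∃ g : V ⟶ S.V n, g ≫ S.ι n = m)
    (φ : cokernel (pullback.fst m (S.ι n)) ≅ e) :
    ¬ ∃ s : e ⟶ V, s ≫ (cokernel.π (pullback.fst m (S.ι n)) ≫ φ.hom) = 𝟙 e := by
  rintro ⟨s, hs⟩
  have hker : pullback.fst m (S.ι n) ≫ m ≫ S.π n = 0 := by
    rw [← Category.assoc, pullback.condition, Category.assoc, S.zero, comp_zero]
  set q := cokernel.π (pullback.fst m (S.ι n)) ≫ φ.hom
  set f := φ.inv ≫ cokernel.desc _ _ hker
  have hfac : m ≫ S.π n = q ≫ f := by simp [q, f]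
  have hf : f = 0 := calc
    f = (s ≫ q) ≫ f := by rw [hs, Category.id_comp]
    _ = (s ≫ m) ≫ S.π n := by rw [Category.assoc, ← hfac, Category.assoc]
    _ = 0 := S.comp_π_eq_zero hEnd hn (s ≫ m)
  have hmπ : m ≫ S.π n = 0 := by rw [hfac, hf, comp_zero]
  have := (S.shortExact n hn).mono_f
  exact hnot ⟨(S.shortExact n hn).exact.lift m hmπ, (S.shortExact n hn).exact.lift_f m hmπ⟩

/-- **Non-splitting of subextensions of the universal extensions.**
Let `(V_N)` be a universal system and `N ≥ 2` (here `N = n + 1` with `n ≥ 1`).  Let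
`V` be a subobject of `V_N` (given by a monomorphism `m : V ⟶ V (n+1)`) which is not
contained in `V_{N-1} = V n`, let `V' := V ∩ V_{N-1}` (the pullback of `m` and
`ι n`), and assume that the quotient `V/V'` (the cokernel of `V' ⟶ V`) is isomorphic
to `e` via `φ`.  Then the short exact sequence `0 → V' → V → e → 0` does not split:
the epimorphism `V ⟶ e` admits no section. -/
theorem statement1
    {K : Type*} [Field K] [CharZero K]
    {C : Type u} [Category.{v} C] [Abelian C] [CategoryTheory.Linear K C] [HasExt.{w} C]
    (e : C)
    (hEnd : Function.Bijective fun c : K => c • 𝟙 e)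
    (hUnip : ∀ V : C, ∃ n, UnipLE e n V)
    (S : UniversalSystem K e)
    (n : ℕ) (hn : 1 ≤ n)
    (V : C) (m : V ⟶ S.V (n + 1)) (hm : Mono m)
    (hnot : ¬ ∃ g : V ⟶ S.V n, g ≫ S.ι n = m)
    (φ : cokernel (pullback.fst m (S.ι n)) ≅ e) :
    ¬ ∃ s : e ⟶ V, s ≫ (cokernel.π (pullback.fst m (S.ι n)) ≫ φ.hom) = 𝟙 e :=
  statement1_general e hEnd S n hn V m hnot φ
end

section
/- Let (V_N) be a universal system, let N ≥ 2, and let V be a subobject of V_N. If the unipotency of V is strictly less than N, then V is contained in the subobject V_{N−1} of V_N (i.e., the monomorphism V → V_N factors through ι_N : V_{N−1} → V_N). -/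
/-!
Formalization of results from the appendix "Universal objects of unipotent Tannakian
categories" of K. Sakugawa, "On the infinite Frobenius action on de Rham fundamental
groups of affine curves".

Setting: `K` is a field of characteristic zero, `C` is a `K`-linear abelian category
with a fixed object `e` (the unit object `𝟙` of the unipotent neutral Tannakian
category; only the `K`-linear abelian structure is used), whose endomorphism ring is
`K` (expressed by the hypothesis that `c ↦ c • 𝟙 e` is a bijection `K → End e`).
-/

open CategoryTheory CategoryTheory.Limits CategoryTheory.Abelian

attribute [local instance] CategoryTheory.Abelian.hasFiniteBiproducts

universe w v u

/-!
Choose `W ⊆ V` with `V / W ≅ 𝟙^r` and `W` of smaller unipotency. By induction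
`W → V_{n+1}` lifts to `g : W → V_n`, and `g` lifts further to `V_{n-1}`. Pushing along
`ι` kills `Ext¹(𝟙, V_{n-1})`, since every class there is the pullback of the universal
extension, so `g` kills `Ext¹(𝟙, W)`. By naturality of extension classes, each
`𝟙 → V / W → Ext¹(𝟙, V_n) ⊗ 𝟙` then has zero class and is therefore zero, so
`V → V_{n+1} → Ext¹(𝟙, V_n) ⊗ 𝟙` vanishes and `V → V_{n+1}` lifts to `V_n`.
-/

lemma CategoryTheory.Limits.eq_zero_of_iso_biproduct {C : Type u} [Category.{v} C]
    [Preadditive C] [HasFiniteBiproducts C] {e X Y : C} {r : ℕ}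
    (iso : X ≅ ⨁ fun _ : Fin r => e) (θ : X ⟶ Y) (h : ∀ j : e ⟶ X, j ≫ θ = 0) : θ = 0 := by
  suffices iso.inv ≫ θ = 0 by rw [← iso.hom_inv_id_assoc θ, this, comp_zero]
  refine biproduct.hom_ext' _ _ fun i => ?_
  rw [comp_zero, ← Category.assoc]
  exact h _

namespace UniversalSystem

variable {K : Type*} [Field K]
variable {C : Type u} [Category.{v} C] [Abelian C] [Linear K C] [HasExt.{w} C]
variable {e : C} (S : UniversalSystem K e)

lemma exists_dual_hom {k : ℕ} (hk : 1 ≤ k) {ι : Type*} (b : Module.Basis ι K (Ext e (S.V k) 1))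
    (i : ι) : ∃ g : S.T k ⟶ e, ∀ x, S.coev k x ≫ g = b.coord i x • 𝟙 e := by
  obtain ⟨g, hg⟩ := (S.tensor_unit k hk e).2 ((b.coord i).smulRight (𝟙 e))
  exact ⟨g, fun x => by simpa using LinearMap.congr_fun hg x⟩

lemma coev_surjective (hEnd : Function.Surjective fun c : K => c • 𝟙 e)
    {k : ℕ} (hk : 1 ≤ k) : Function.Surjective (S.coev k) := by
  have := S.fd k hk
  let b := Module.finBasis K (Ext e (S.V k) 1)
  choose g hg using S.exists_dual_hom hk b
  -- `g` and `coev ∘ b` exhibit `T k` as a direct sum of copies of `e`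
  have hid : ∑ i, g i ≫ S.coev k (b i) = 𝟙 (S.T k) := by
    refine (S.tensor_unit k hk (S.T k)).1 (LinearMap.ext fun x => ?_)
    simp only [LinearMap.coe_comp, Function.comp_apply, Linear.rightComp_apply,
      Preadditive.comp_sum, Category.comp_id]
    calc ∑ i, S.coev k x ≫ g i ≫ S.coev k (b i)
        = S.coev k (∑ i, b.coord i x • b i) := by
          simp only [map_sum, map_smul, ← Category.assoc, hg, Linear.smul_comp, Category.id_comp]
      _ = S.coev k x := by simp only [Module.Basis.coord_apply, b.sum_repr]
  intro h
  choose c hc using fun i => hEnd (h ≫ g i)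
  refine ⟨∑ i, c i • b i, ?_⟩
  calc S.coev k (∑ i, c i • b i) = h ≫ ∑ i, g i ≫ S.coev k (b i) := by
        simp only [map_sum, map_smul, Preadditive.comp_sum, ← Category.assoc, ← hc,
          Linear.smul_comp, Category.id_comp]
    _ = h := by rw [hid, Category.comp_id]

lemma eq_zero_of_mk₀_comp_extClass_eq_zero (hEnd : Function.Surjective fun c : K => c • 𝟙 e)
    {k : ℕ} (hk : 1 ≤ k) (h : e ⟶ S.T k)
    (hh : (Ext.mk₀ h).comp (S.shortExact k hk).extClass (zero_add 1) = 0) : h = 0 := by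
  obtain ⟨x, rfl⟩ := S.coev_surjective hEnd hk h
  rw [← S.connecting k hk x, hh, map_zero]

lemma ext_comp_mk₀_ι_eq_zero {k : ℕ} (hk : 1 ≤ k) (γ : Ext e (S.V k) 1) :
    γ.comp (Ext.mk₀ (S.ι k)) (add_zero 1) = 0 := by
  rw [← S.connecting k hk γ, Ext.comp_assoc_of_third_deg_zero,
    (S.shortExact k hk).extClass_comp, Ext.comp_zero]

lemma comp_π_eq_zero_s2 (hEnd : Function.Surjective fun c : K => c • 𝟙 e) {n : ℕ} (hn : 1 ≤ n)
    {W V : C} (w : W ⟶ V) [Mono w] {r : ℕ} (iso : cokernel w ≅ ⨁ fun _ : Fin r => e)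
    (φ : V ⟶ S.V (n + 1)) (g : W ⟶ S.V n) (hg : g ≫ S.ι n = w ≫ φ)
    (hβ : ∀ β : Ext e W 1, β.comp (Ext.mk₀ g) (add_zero 1) = 0) : φ ≫ S.π n = 0 := by
  have hwφ : w ≫ φ ≫ S.π n = 0 := by
    rw [← Category.assoc, ← hg, Category.assoc, S.zero, comp_zero]
  have hW : (ShortComplex.mk w (cokernel.π w) (cokernel.condition w)).ShortExact :=
    { exact := ShortComplex.exact_of_g_is_cokernel _ (cokernelIsCokernel w) }
  let θ := cokernel.desc w (φ ≫ S.π n) hwφ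
  have hnat := hW.extClass_naturality (S.shortExact n hn)
    ⟨g, φ, θ, hg, (cokernel.π_desc w (φ ≫ S.π n) hwφ).symm⟩
  have hθ : θ = 0 := by
    refine eq_zero_of_iso_biproduct iso θ fun j => ?_
    refine S.eq_zero_of_mk₀_comp_extClass_eq_zero hEnd hn _ ?_
    rw [← Ext.mk₀_comp_mk₀_assoc, ← hnat, ← Ext.comp_assoc_of_third_deg_zero]
    exact hβ _
  rw [← cokernel.π_desc w _ hwφ]
  change cokernel.π w ≫ θ = 0
  rw [hθ, comp_zero]

lemma exists_lift_of_unipLE (hEnd : Function.Surjective fun c : K => c • 𝟙 e)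
    {ℓ : ℕ} {V : C} (hV : UnipLE e ℓ V) :
    ∀ n, 1 ≤ n → ℓ ≤ n → ∀ φ : V ⟶ S.V (n + 1), ∃ g : V ⟶ S.V n, g ≫ S.ι n = φ := by
  induction hV with
  | zero V hV =>
    exact fun n _ _ φ => ⟨0, hV.eq_of_src _ _⟩
  | @step ℓ V W w hw r hW hco ih =>
    intro n hn hℓn φ
    obtain ⟨iso⟩ := hco
    obtain ⟨g, hg⟩ := ih n hn (by omega) (w ≫ φ)
    have hβ : ∀ β : Ext e W 1, β.comp (Ext.mk₀ g) (add_zero 1) = 0 := by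
      obtain ⟨k, rfl⟩ : ∃ k, n = k + 1 := ⟨n - 1, by omega⟩
      intro β
      rcases Nat.eq_zero_or_pos k with rfl | hk
      · obtain rfl : ℓ = 0 := by omega
        obtain ⟨_, hWzero⟩ := hW
        rw [← Ext.comp_mk₀_id β, hWzero.eq_of_src (𝟙 W) 0, Ext.mk₀_zero, Ext.comp_zero,
          Ext.zero_comp]
      · obtain ⟨g', rfl⟩ := ih k hk (by omega) g
        rw [← Ext.mk₀_comp_mk₀, ← Ext.comp_assoc_of_third_deg_zero]
        exact S.ext_comp_mk₀_ι_eq_zero hk _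
    have := (S.shortExact n hn).mono_f
    exact (S.shortExact n hn).exact.lift' φ (S.comp_π_eq_zero_s2 hEnd hn w iso φ g hg hβ)

end UniversalSystem

theorem statement2_general
    {K : Type*} [Field K]
    {C : Type u} [Category.{v} C] [Abelian C] [CategoryTheory.Linear K C] [HasExt.{w} C]
    (e : C)
    (hEnd : Function.Bijective fun c : K => c • 𝟙 e)
    (hUnip : ∀ V : C, ∃ n, UnipLE e n V)
    (S : UniversalSystem K e)
    (n : ℕ) (hn : 1 ≤ n)
    (V : C) (m : V ⟶ S.V (n + 1))
    (hV : unipotency e V < n + 1) :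
    ∃ g : V ⟶ S.V n, g ≫ S.ι n = m :=
  S.exists_lift_of_unipLE hEnd.2 (Nat.sInf_mem (hUnip V)) n hn (Nat.lt_succ_iff.mp hV) m

/-- **Lemma A.6 (Lemma `lema1`).**
Let `(V_N)` be a universal system, `N ≥ 2` (here `N = n + 1` with `n ≥ 1`), and let
`V` be a subobject of `V_N` (given by a monomorphism `m : V ⟶ V (n+1)`).  If the
unipotency of `V` is strictly less than `N`, then `V` is a subobject of
`V_{N-1} = V n`, i.e. the monomorphism `m` factors through `ι n : V n ⟶ V (n+1)`. -/
theorem statement2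
    {K : Type*} [Field K] [CharZero K]
    {C : Type u} [Category.{v} C] [Abelian C] [CategoryTheory.Linear K C] [HasExt.{w} C]
    (e : C)
    (hEnd : Function.Bijective fun c : K => c • 𝟙 e)
    (hUnip : ∀ V : C, ∃ n, UnipLE e n V)
    (S : UniversalSystem K e)
    (n : ℕ) (hn : 1 ≤ n)
    (V : C) (m : V ⟶ S.V (n + 1)) (hm : Mono m)
    (hV : unipotency e V < n + 1) :
    ∃ g : V ⟶ S.V n, g ≫ S.ι n = m :=
  statement2_general e hEnd hUnip S n hn V m hV
end

section
/- The double coset U(ℤ_p)·w·K₀(pʳ) in GL₂(ℤ_p) is the disjoint union of the pʳ left cosets τ_a·w·K₀(pʳ) for a = 0, 1, …, pʳ − 1: that is, U(ℤ_p) w K₀(pʳ) = ⋃_{a=0}^{pʳ−1} τ_a w K₀(pʳ), and τ_a w K₀(pʳ) ∩ τ_b w K₀(pʳ) = ∅ whenever 0 ≤ a < b ≤ pʳ − 1. -/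
/-!
Formalization of Lemma 6.8 (`lem5-1`) of K. Sakugawa, "On the infinite Frobenius
action on de Rham fundamental groups of affine curves": the decomposition of the
double coset `U(ℤ_p) w K₀(pʳ)` in `GL₂(ℤ_p)` into the `pʳ` left cosets
`τ_a w K₀(pʳ)`, `a = 0, 1, …, pʳ − 1`.
-/

open Matrix

section Defs

variable (p : ℕ) [Fact p.Prime] (r : ℕ)

/-- `K₀(pʳ)`: the subgroup of `GL₂(ℤ_p)` consisting of the matrices whose `(2,1)`
entry lies in `pʳ ℤ_p`. -/
def K0 : Subgroup (GL (Fin 2) ℤ_[p]) where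
  carrier := {g | (g : Matrix (Fin 2) (Fin 2) ℤ_[p]) 1 0 ∈ Ideal.span {(p : ℤ_[p]) ^ r}}
  one_mem' := by
    simp [Ideal.zero_mem]
  mul_mem' := by
    intro g h hg hh
    have : ((g * h : GL (Fin 2) ℤ_[p]) : Matrix (Fin 2) (Fin 2) ℤ_[p]) 1 0
        = (g : Matrix (Fin 2) (Fin 2) ℤ_[p]) 1 0 * (h : Matrix (Fin 2) (Fin 2) ℤ_[p]) 0 0
          + (g : Matrix (Fin 2) (Fin 2) ℤ_[p]) 1 1 * (h : Matrix (Fin 2) (Fin 2) ℤ_[p]) 1 0 := by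
      simp [Matrix.mul_apply, Fin.sum_univ_two]
    simp only [Set.mem_setOf_eq] at *
    rw [this]
    exact Ideal.add_mem _ (Ideal.mul_mem_right _ _ hg) (Ideal.mul_mem_left _ _ hh)
  inv_mem' := by
    intro g hg
    simp only [Set.mem_setOf_eq] at *
    have h1 : ((g⁻¹ : GL (Fin 2) ℤ_[p]) : Matrix (Fin 2) (Fin 2) ℤ_[p])
        = ((g : Matrix (Fin 2) (Fin 2) ℤ_[p]))⁻¹ := by
      rw [Matrix.coe_units_inv]
    rw [h1, Matrix.inv_def]
    have h2 : ((g : Matrix (Fin 2) (Fin 2) ℤ_[p]).adjugate) 1 0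
        = -((g : Matrix (Fin 2) (Fin 2) ℤ_[p]) 1 0) := by
      rw [Matrix.adjugate_fin_two]
      simp
    simp only [Matrix.smul_apply, h2, smul_eq_mul]
    exact Ideal.mul_mem_left _ _ (neg_mem hg)

/-- The unipotent upper-triangular matrix `τ_a = [[1, a], [0, 1]]` as an element of
`GL₂(ℤ_p)`. -/
noncomputable def tau (a : ℤ_[p]) : GL (Fin 2) ℤ_[p] :=
  Matrix.nonsingInvUnit !![1, a; 0, 1] (by simp [Matrix.det_fin_two_of])

/-- The matrix `w = [[0, 1], [−1, 0]]` as an element of `GL₂(ℤ_p)`. -/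
noncomputable def wMat : GL (Fin 2) ℤ_[p] :=
  Matrix.nonsingInvUnit !![0, 1; -1, 0] (by simp [Matrix.det_fin_two_of])

/-- `U(ℤ_p)`: the group of upper unitriangular matrices `[[1, x], [0, 1]]`,
`x ∈ ℤ_p`, in `GL₂(ℤ_p)`. -/
def Uunip : Set (GL (Fin 2) ℤ_[p]) := Set.range (tau p)

/-- The left coset `τ_a w K₀(pʳ)` in `GL₂(ℤ_p)`. -/
def tauCoset (a : ℤ_[p]) : Set (GL (Fin 2) ℤ_[p]) :=
  {x | ∃ k ∈ K0 p r, x = tau p a * wMat p * k}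

end Defs

section Aux

variable (p : ℕ) [Fact p.Prime] (r : ℕ)

lemma mem_K0_iff (g : GL (Fin 2) ℤ_[p]) :
    g ∈ K0 p r ↔ (g : Matrix (Fin 2) (Fin 2) ℤ_[p]) 1 0 ∈ Ideal.span {(p : ℤ_[p]) ^ r} :=
  Iff.rfl

lemma tau_val (a : ℤ_[p]) : (tau p a : Matrix (Fin 2) (Fin 2) ℤ_[p]) = !![1, a; 0, 1] := rfl

lemma wMat_val : (wMat p : Matrix (Fin 2) (Fin 2) ℤ_[p]) = !![0, 1; -1, 0] := rfl

lemma tau_mul (a b : ℤ_[p]) : tau p a * tau p b = tau p (a + b) := by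
  apply Units.ext
  show (!![1, a; 0, 1] : Matrix (Fin 2) (Fin 2) ℤ_[p]) * !![1, b; 0, 1] = !![1, a + b; 0, 1]
  rw [Matrix.mul_fin_two]
  norm_num [add_comm]

/-- The matrix `[[1,0],[-c,1]]` as a unit. -/
noncomputable def kUnit (c : ℤ_[p]) : GL (Fin 2) ℤ_[p] :=
  Matrix.nonsingInvUnit !![1, 0; -c, 1] (by simp [Matrix.det_fin_two_of])

lemma kUnit_val (c : ℤ_[p]) :
    (kUnit p c : Matrix (Fin 2) (Fin 2) ℤ_[p]) = !![1, 0; -c, 1] := rfl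

lemma w_mul_kUnit (c : ℤ_[p]) : wMat p * kUnit p c = tau p c * wMat p := by
  apply Units.ext
  show (!![0, 1; -1, 0] : Matrix (Fin 2) (Fin 2) ℤ_[p]) * !![1, 0; -c, 1]
      = !![1, c; 0, 1] * !![0, 1; -1, 0]
  rw [Matrix.mul_fin_two, Matrix.mul_fin_two]
  norm_num

lemma kUnit_mem_iff (c : ℤ_[p]) :
    kUnit p c ∈ K0 p r ↔ c ∈ Ideal.span {(p : ℤ_[p]) ^ r} := by
  rw [mem_K0_iff, kUnit_val]
  have h : (!![1, 0; -c, 1] : Matrix (Fin 2) (Fin 2) ℤ_[p]) 1 0 = -c := by simp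
  rw [h]
  constructor
  · intro h'
    simpa using neg_mem h'
  · exact neg_mem

lemma tau_w_shift (a d : ℤ_[p]) (k : GL (Fin 2) ℤ_[p]) :
    tau p a * wMat p * (kUnit p d * k) = tau p (a + d) * wMat p * k := by
  rw [← mul_assoc, mul_assoc (tau p a), w_mul_kUnit, ← mul_assoc, tau_mul]

lemma natCast_mem_span_iff (n : ℕ) :
    ((n : ℤ_[p]) ∈ Ideal.span {(p : ℤ_[p]) ^ r}) ↔ (p ^ r ∣ n) := by
  have hk := PadicInt.ker_toZModPow (p := p) r
  constructor
  · intro h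
    have : (PadicInt.toZModPow r) (n : ℤ_[p]) = 0 := by
      rw [← RingHom.mem_ker, hk]; exact h
    rw [map_natCast] at this
    exact (ZMod.natCast_eq_zero_iff n (p ^ r)).mp this
  · intro h
    obtain ⟨m, rfl⟩ := h
    rw [Ideal.mem_span_singleton]
    exact ⟨(m : ℤ_[p]), by push_cast; ring⟩

end Aux

/-- **Lemma 6.8 (`lem5-1`).**  Let `p` be a prime and `r` a positive integer.  The
double coset `U(ℤ_p) · w · K₀(pʳ)` in `GL₂(ℤ_p)` is the disjoint union of the `pʳ`
left cosets `τ_a · w · K₀(pʳ)` for `a = 0, 1, …, pʳ − 1`: it equals the union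
`⋃_{a=0}^{pʳ−1} τ_a w K₀(pʳ)`, and `τ_a w K₀(pʳ) ∩ τ_b w K₀(pʳ) = ∅` whenever
`0 ≤ a < b ≤ pʳ − 1`. -/
theorem statement10 (p : ℕ) [Fact p.Prime] (r : ℕ) (hr : 0 < r) :
    ({x | ∃ u ∈ Uunip p, ∃ k ∈ K0 p r, x = u * wMat p * k}
        = ⋃ a ∈ Finset.range (p ^ r), tauCoset p r (a : ℤ_[p])) ∧
      ∀ a b : ℕ, a < b → b ≤ p ^ r - 1 →
        tauCoset p r (a : ℤ_[p]) ∩ tauCoset p r (b : ℤ_[p]) = ∅ := by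
  have hppos : 0 < p ^ r := pow_pos (Fact.out (p := p.Prime)).pos r
  constructor
  · ext x
    simp only [Set.mem_setOf_eq, Set.mem_iUnion, Finset.mem_range]
    constructor
    · rintro ⟨u, ⟨c, rfl⟩, k, hk, rfl⟩
      refine ⟨c.appr r, PadicInt.appr_lt c r, kUnit p (c - (c.appr r : ℤ_[p])) * k, ?_, ?_⟩
      · exact mul_mem ((kUnit_mem_iff p r _).mpr (PadicInt.appr_spec r c)) hk
      · show tau p c * wMat p * k
            = tau p ((c.appr r : ℤ_[p])) * wMat p * (kUnit p (c - (c.appr r : ℤ_[p])) * k)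
        rw [tau_w_shift]
        have h1 : ((c.appr r : ℤ_[p])) + (c - (c.appr r : ℤ_[p])) = c := by ring
        rw [h1]
    · rintro ⟨a, _, k, hk, rfl⟩
      exact ⟨tau p (a : ℤ_[p]), ⟨_, rfl⟩, k, hk, rfl⟩
  · intro a b hab hb
    ext x
    simp only [Set.mem_inter_iff, Set.mem_empty_iff_false, iff_false, not_and,
      tauCoset, Set.mem_setOf_eq]
    rintro ⟨k, hk, rfl⟩ ⟨k', hk', heq⟩
    have hb' : b < p ^ r := lt_of_le_of_lt hb (Nat.sub_lt hppos one_pos)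
    have h1 : tau p (b : ℤ_[p]) * wMat p * (kUnit p ((a : ℤ_[p]) - (b : ℤ_[p])) * k)
        = tau p (b : ℤ_[p]) * wMat p * k' := by
      rw [tau_w_shift]
      have h2 : (b : ℤ_[p]) + ((a : ℤ_[p]) - (b : ℤ_[p])) = (a : ℤ_[p]) := by ring
      rw [h2, heq]
    have h4 : kUnit p ((a : ℤ_[p]) - (b : ℤ_[p])) * k = k' := mul_left_cancel h1
    have h5 : kUnit p ((a : ℤ_[p]) - (b : ℤ_[p])) = k' * k⁻¹ := by
      rw [← h4, mul_assoc, mul_inv_cancel, mul_one]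
    have h6 : kUnit p ((a : ℤ_[p]) - (b : ℤ_[p])) ∈ K0 p r :=
      h5 ▸ mul_mem hk' (inv_mem hk)
    have h7 : ((b - a : ℕ) : ℤ_[p]) ∈ Ideal.span {(p : ℤ_[p]) ^ r} := by
      rw [Nat.cast_sub hab.le]
      simpa [neg_sub] using neg_mem ((kUnit_mem_iff p r _).mp h6)
    have h9 : p ^ r ≤ b - a :=
      Nat.le_of_dvd (Nat.sub_pos_of_lt hab) ((natCast_mem_span_iff p r _).mp h7)
    omega
end
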